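/- arXiv:2509.20924 — 3 statements merged into one kernel-verified Lean document; each statement's English description precedes it below -/
import Mathlib

section
/- Let P and Q be probability measures on a measurable space Ω with Q absolutely continuous with respect to P and KL(Q‖P) < ∞. Let f : Ω → ℝ be measurable and Q-integrable with E_P[f] = μ, and suppose f − μ is sub-Gaussian with variance proxy σ² > 0 under P, i.e. E_P[exp(t(f − μ))] ≤ exp(σ²t²/2) for every real t. Then for every real λ > 0, E_Q[f] ≥ μ − KL(Q‖P)/λ − σ²λ/2. -/
/-! Gibbs' inequality for `Q` against the tilted measure `P.tilted g` gives the Donsker–Varadhan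
bound `E_Q[g] ≤ KL(Q‖P) + log E_P[exp g]`. With `g = -λ (f - μ)` the sub-Gaussian hypothesis bounds
the last term by `v λ² / 2`; dividing by `λ` gives the claim. -/

open MeasureTheory Real

open Classical in
/-- The Kullback–Leibler divergence of `Q` from `P`, as an extended real number:
it is the `Q`-integral of the log-likelihood ratio `llr Q P` when `Q ≪ P` and this
log-likelihood ratio is `Q`-integrable, and `⊤` otherwise. -/
noncomputable def klDiv {Ω : Type*} [MeasurableSpace Ω] (Q P : Measure Ω) : EReal :=
  if Q ≪ P ∧ Integrable (llr Q P) Q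
  then ((∫ ω, llr Q P ω ∂Q : ℝ) : EReal)
  else ⊤

section KLDivergence

variable {Ω : Type*} [MeasurableSpace Ω] {P Q : Measure Ω}

lemma absolutelyContinuous_and_integrable_llr_of_klDiv_lt_top (hKL : klDiv Q P < ⊤) :
    Q ≪ P ∧ Integrable (llr Q P) Q := by
  by_contra h
  simp [klDiv, if_neg h] at hKL

lemma toReal_klDiv_of_klDiv_lt_top (hKL : klDiv Q P < ⊤) :
    (klDiv Q P).toReal = ∫ ω, llr Q P ω ∂Q := by
  rw [klDiv, if_pos (absolutelyContinuous_and_integrable_llr_of_klDiv_lt_top hKL)]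
  exact EReal.toReal_coe _

lemma integral_llr_nonneg [IsProbabilityMeasure Q] [IsProbabilityMeasure P]
    (hQP : Q ≪ P) (h_int : Integrable (llr Q P) Q) : 0 ≤ ∫ ω, llr Q P ω ∂Q := by
  simpa using InformationTheory.integral_llr_add_sub_measure_univ_nonneg hQP h_int

lemma integral_le_toReal_klDiv_add_log_integral_exp [IsProbabilityMeasure Q] [SigmaFinite P]
    (hKL : klDiv Q P < ⊤) {g : Ω → ℝ} (hgQ : Integrable g Q)
    (hgP : Integrable (fun ω ↦ exp (g ω)) P) :
    ∫ ω, g ω ∂Q ≤ (klDiv Q P).toReal + log (∫ ω, exp (g ω) ∂P) := by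
  obtain ⟨hQP, h_int⟩ := absolutelyContinuous_and_integrable_llr_of_klDiv_lt_top hKL
  have : NeZero P := ⟨fun hP ↦ IsProbabilityMeasure.ne_zero Q (by simpa [hP] using hQP)⟩
  have := isProbabilityMeasure_tilted hgP
  have h_gibbs := integral_llr_nonneg (hQP.trans (absolutelyContinuous_tilted hgP))
    (integrable_llr_tilted_right hQP hgQ h_int hgP)
  rw [integral_llr_tilted_right hQP hgQ hgP h_int] at h_gibbs
  rw [toReal_klDiv_of_klDiv_lt_top hKL]
  linarith

end KLDivergence

theorem subgaussian_change_of_measure_lower_bound_general {Ω : Type*} [MeasurableSpace Ω]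
    (P Q : Measure Ω) [IsProbabilityMeasure P] [IsProbabilityMeasure Q]
    (hKL : klDiv Q P < ⊤)
    (f : Ω → ℝ) (hfQ : Integrable f Q)
    (μ : ℝ)
    (v : ℝ)
    (hSG : ∀ t : ℝ, Integrable (fun ω => Real.exp (t * (f ω - μ))) P ∧
      ∫ ω, Real.exp (t * (f ω - μ)) ∂P ≤ Real.exp (v * t ^ 2 / 2)) :
    ∀ l : ℝ, 0 < l →
      ∫ ω, f ω ∂Q ≥ μ - (klDiv Q P).toReal / l - v * l / 2 := by
  intro l hl
  obtain ⟨h_int, h_mgf⟩ := hSG (-l)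
  have h_dv := integral_le_toReal_klDiv_add_log_integral_exp (g := fun ω ↦ -l * (f ω - μ)) hKL
    ((hfQ.sub (integrable_const μ)).const_mul (-l)) h_int
  have h_mean : ∫ ω, -l * (f ω - μ) ∂Q = -l * (∫ ω, f ω ∂Q - μ) := by
    rw [integral_const_mul, integral_sub hfQ (integrable_const μ), integral_const]
    simp
  have h_log : log (∫ ω, exp (-l * (f ω - μ)) ∂P) ≤ v * l ^ 2 / 2 := by
    simpa using log_le_log (integral_exp_pos h_int) h_mgf
  have h_split : (klDiv Q P).toReal / l + v * l / 2 = ((klDiv Q P).toReal + v * l ^ 2 / 2) / l := by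
    field_simp
  rw [ge_iff_le, sub_sub, sub_le_comm, h_split, le_div_iff₀ hl]
  linarith

/-- If `f - μ` is sub-Gaussian with variance proxy `v` under `P`, `Q ≪ P` with finite
KL divergence and `f` is `Q`-integrable, then for every `λ > 0`,
`E_Q[f] ≥ μ - KL(Q‖P)/λ - v λ / 2`. -/
theorem subgaussian_change_of_measure_lower_bound {Ω : Type*} [MeasurableSpace Ω]
    (P Q : Measure Ω) [IsProbabilityMeasure P] [IsProbabilityMeasure Q]
    (hQP : Q ≪ P) (hKL : klDiv Q P < ⊤)
    (f : Ω → ℝ) (hf : Measurable f) (hfQ : Integrable f Q)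
    (μ : ℝ) (hμ : ∫ ω, f ω ∂P = μ)
    (v : ℝ) (hv : 0 < v)
    (hSG : ∀ t : ℝ, Integrable (fun ω => Real.exp (t * (f ω - μ))) P ∧
      ∫ ω, Real.exp (t * (f ω - μ)) ∂P ≤ Real.exp (v * t ^ 2 / 2)) :
    ∀ l : ℝ, 0 < l →
      ∫ ω, f ω ∂Q ≥ μ - (klDiv Q P).toReal / l - v * l / 2 :=
  subgaussian_change_of_measure_lower_bound_general P Q hKL f hfQ μ v hSG
end

section
/- Let P and Q be probability measures on a measurable space Ω with Q absolutely continuous with respect to P and KL(Q‖P) < ∞. Let f : Ω → ℝ be measurable and Q-integrable with E_P[f] = μ, and suppose f − μ is sub-Gaussian with variance proxy σ² > 0 under P, i.e. E_P[exp(t(f − μ))] ≤ exp(σ²t²/2) for every real t. Then E_Q[f] ≥ μ − √(2·σ²·KL(Q‖P)). -/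
/-!
By the Donsker–Varadhan inequality `E_Q[g] ≤ KL(Q‖P) + log E_P[exp g]`, which is Gibbs'
inequality for `Q` against the tilted measure `P.tilted g`, applied to `g = t (μ - f)`,
`t (μ - E_Q f) ≤ KL(Q‖P) + log E_P[exp (t (μ - f))] ≤ KL(Q‖P) + v t² / 2`,
and the choice `t = (μ - E_Q f) / v` gives `(μ - E_Q f)² ≤ 2 v KL(Q‖P)`.
-/

open MeasureTheory Real ProbabilityTheory

lemma le_sqrt_two_mul_of_forall_mul_le_add {a K v : ℝ} (hv : 0 < v)
    (h : ∀ t, t * a ≤ K + v * t ^ 2 / 2) : a ≤ √(2 * v * K) := by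
  have hopt := h (a / v)
  have hsq : a ^ 2 ≤ 2 * v * K := by
    field_simp at hopt
    nlinarith
  exact (le_abs_self a).trans (Real.abs_le_sqrt hsq)

section

variable {Ω : Type*} [MeasurableSpace Ω] {P Q : Measure Ω}

lemma klDiv_lt_top_iff : klDiv Q P < ⊤ ↔ Q ≪ P ∧ Integrable (llr Q P) Q := by
  unfold klDiv
  split_ifs with h
  · simp [h]
  · simpa using h

lemma toReal_klDiv (hQP : Q ≪ P) (hllr : Integrable (llr Q P) Q) :
    (klDiv Q P).toReal = ∫ ω, llr Q P ω ∂Q := by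
  simp [klDiv, hQP, hllr]

lemma integral_le_integral_llr_add_log_integral_exp [IsProbabilityMeasure Q] [SigmaFinite P]
    (hQP : Q ≪ P) (hllr : Integrable (llr Q P) Q) {g : Ω → ℝ} (hgQ : Integrable g Q)
    (hgP : Integrable (fun ω ↦ exp (g ω)) P) :
    ∫ ω, g ω ∂Q ≤ ∫ ω, llr Q P ω ∂Q + log (∫ ω, exp (g ω) ∂P) := by
  have : NeZero P := ⟨fun hP ↦ IsProbabilityMeasure.ne_zero Q (by simpa [hP] using hQP)⟩
  have : IsProbabilityMeasure (P.tilted g) := isProbabilityMeasure_tilted hgP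
  have hGibbs := InformationTheory.integral_llr_add_sub_measure_univ_nonneg
    (hQP.trans (absolutelyContinuous_tilted hgP)) (integrable_llr_tilted_right hQP hgQ hllr hgP)
  rw [integral_llr_tilted_right hQP hgQ hgP hllr] at hGibbs
  simp only [probReal_univ, add_sub_cancel_right] at hGibbs
  linarith

lemma ProbabilityTheory.HasSubgaussianMGF.integral_le_sqrt_two_mul_integral_llr
    [IsProbabilityMeasure P] [IsProbabilityMeasure Q] {X : Ω → ℝ} {c : NNReal}
    (hX : HasSubgaussianMGF X c P) (hc : 0 < c) (hXQ : Integrable X Q) (hQP : Q ≪ P)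
    (hllr : Integrable (llr Q P) Q) :
    ∫ ω, X ω ∂Q ≤ √(2 * c * ∫ ω, llr Q P ω ∂Q) := by
  refine le_sqrt_two_mul_of_forall_mul_le_add hc fun t ↦ ?_
  calc t * ∫ ω, X ω ∂Q = ∫ ω, t * X ω ∂Q := (integral_const_mul t X).symm
    _ ≤ ∫ ω, llr Q P ω ∂Q + cgf X P t :=
      integral_le_integral_llr_add_log_integral_exp hQP hllr (hXQ.const_mul t)
        (hX.integrable_exp_mul t)
    _ ≤ ∫ ω, llr Q P ω ∂Q + c * t ^ 2 / 2 := by gcongr; exact hX.cgf_le t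

end

theorem subgaussian_kl_lower_bound_general {Ω : Type*} [MeasurableSpace Ω]
    (P Q : Measure Ω) [IsProbabilityMeasure P] [IsProbabilityMeasure Q]
    (hKL : klDiv Q P < ⊤)
    (f : Ω → ℝ) (hfQ : Integrable f Q)
    (μ : ℝ)
    (v : ℝ) (hv : 0 < v)
    (hSG : ∀ t : ℝ, Integrable (fun ω => Real.exp (t * (f ω - μ))) P ∧
      ∫ ω, Real.exp (t * (f ω - μ)) ∂P ≤ Real.exp (v * t ^ 2 / 2)) :
    ∫ ω, f ω ∂Q ≥ μ - Real.sqrt (2 * v * (klDiv Q P).toReal) := by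
  obtain ⟨hQP, hllr⟩ := klDiv_lt_top_iff.1 hKL
  have hSub : HasSubgaussianMGF (fun ω ↦ f ω - μ) v.toNNReal P :=
    ⟨fun t ↦ (hSG t).1, fun t ↦ by rw [Real.coe_toNNReal v hv.le]; exact (hSG t).2⟩
  have hTransport := hSub.neg.integral_le_sqrt_two_mul_integral_llr (Real.toNNReal_pos.2 hv)
    (hfQ.sub (integrable_const μ)).neg hQP hllr
  rw [toReal_klDiv hQP hllr]
  simp only [Pi.neg_apply, integral_neg, integral_sub hfQ (integrable_const μ), integral_const,
    probReal_univ, smul_eq_mul, one_mul, Real.coe_toNNReal v hv.le] at hTransport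
  linarith

/-- **Certified robustness via KL divergence.** If `f - μ` is sub-Gaussian with variance
proxy `v` under `P`, `Q ≪ P` with finite KL divergence and `f` is `Q`-integrable, then
`E_Q[f] ≥ μ - √(2 v KL(Q‖P))`. -/
theorem subgaussian_kl_lower_bound {Ω : Type*} [MeasurableSpace Ω]
    (P Q : Measure Ω) [IsProbabilityMeasure P] [IsProbabilityMeasure Q]
    (hQP : Q ≪ P) (hKL : klDiv Q P < ⊤)
    (f : Ω → ℝ) (hf : Measurable f) (hfQ : Integrable f Q)
    (μ : ℝ) (hμ : ∫ ω, f ω ∂P = μ)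
    (v : ℝ) (hv : 0 < v)
    (hSG : ∀ t : ℝ, Integrable (fun ω => Real.exp (t * (f ω - μ))) P ∧
      ∫ ω, Real.exp (t * (f ω - μ)) ∂P ≤ Real.exp (v * t ^ 2 / 2)) :
    ∫ ω, f ω ∂Q ≥ μ - Real.sqrt (2 * v * (klDiv Q P).toReal) :=
  subgaussian_kl_lower_bound_general P Q hKL f hfQ μ v hv hSG
end

section
/- Let σ > 0, let μ be a real number, and let P = N(μ, σ²) be the Gaussian measure on ℝ. Then for every ρ ≥ 0 there exists a probability measure Q on ℝ, absolutely continuous with respect to P, such that KL(Q‖P) = ρ and the mean of the identity function under Q equals μ − √(2σ²ρ); that is, the lower bound E_Q[f] ≥ μ − √(2σ²·KL(Q‖P)) is attained with equality for the identity score f(x) = x when the base distribution is Gaussian. -/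
/-!
Take `Q = N(μ - √(2σ²ρ), σ²)`. Shifting the mean of a Gaussian multiplies its density by the
exponential of an affine function of `x`, so the log-likelihood ratio of `N(m, v)` against
`N(μ, v)` is affine and its `N(m, v)`-mean is `(m - μ)² / (2v)`, which is `ρ` for this shift.
-/

open MeasureTheory Real

open ProbabilityTheory NNReal

lemma llr_withDensity_exp {α : Type*} [MeasurableSpace α] (P : Measure α) [SigmaFinite P]
    {ℓ : α → ℝ} (hℓ : Measurable ℓ) :
    llr (P.withDensity fun x ↦ ENNReal.ofReal (exp (ℓ x))) P =ᵐ[P] ℓ := by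
  filter_upwards [Measure.rnDeriv_withDensity P (hℓ.exp.ennreal_ofReal)] with x hx
  rw [llr, hx, ENNReal.toReal_ofReal (exp_pos _).le, log_exp]

lemma klDiv_eq_integral_of_llr_ae_eq {α : Type*} [MeasurableSpace α] {Q P : Measure α}
    (hQP : Q ≪ P) {ℓ : α → ℝ} (hllr : llr Q P =ᵐ[Q] ℓ) (hℓ : Integrable ℓ Q) :
    klDiv Q P = ((∫ x, ℓ x ∂Q : ℝ) : EReal) := by
  rw [klDiv, if_pos ⟨hQP, hℓ.congr hllr.symm⟩, integral_congr_ae hllr]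

lemma gaussianReal_eq_withDensity_exp (m μ : ℝ) {v : ℝ≥0} (hv : v ≠ 0) :
    gaussianReal m v = (gaussianReal μ v).withDensity
      fun x ↦ ENNReal.ofReal (exp (((x - μ) ^ 2 - (x - m) ^ 2) / (2 * v))) := by
  have hv' : (v : ℝ) ≠ 0 := by exact_mod_cast hv
  rw [gaussianReal_of_var_ne_zero _ hv, gaussianReal_of_var_ne_zero _ hv,
    ← withDensity_mul _ (measurable_gaussianPDF μ v) (by fun_prop)]
  congr 1
  funext x
  rw [Pi.mul_apply, gaussianPDF, gaussianPDF, ← ENNReal.ofReal_mul (gaussianPDFReal_nonneg μ v x),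
    gaussianPDFReal, gaussianPDFReal, mul_assoc (_)⁻¹, ← exp_add]
  congr 3
  field_simp
  ring

lemma gaussianReal_absolutelyContinuous_gaussianReal (m μ : ℝ) {v : ℝ≥0} (hv : v ≠ 0) :
    gaussianReal m v ≪ gaussianReal μ v :=
  (gaussianReal_absolutelyContinuous m hv).trans (gaussianReal_absolutelyContinuous' μ hv)

lemma klDiv_gaussianReal_gaussianReal (m μ : ℝ) {v : ℝ≥0} (hv : v ≠ 0) :
    klDiv (gaussianReal m v) (gaussianReal μ v) = (((m - μ) ^ 2 / (2 * v) : ℝ) : EReal) := by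
  have hv' : (v : ℝ) ≠ 0 := by exact_mod_cast hv
  set ℓ : ℝ → ℝ := fun x ↦ ((x - μ) ^ 2 - (x - m) ^ 2) / (2 * v)
  have hℓ_affine : ℓ = fun x ↦ (m - μ) / v * x - (m ^ 2 - μ ^ 2) / (2 * v) := by
    funext x
    simp only [ℓ]
    field_simp
    ring
  have hid : Integrable (fun x ↦ x) (gaussianReal m v) :=
    (memLp_id_gaussianReal 1).integrable le_rfl
  have hℓ_int : Integrable ℓ (gaussianReal m v) := by
    rw [hℓ_affine]
    exact (hid.const_mul _).sub (integrable_const _)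
  have hllr : llr (gaussianReal m v) (gaussianReal μ v) =ᵐ[gaussianReal m v] ℓ := by
    rw [gaussianReal_eq_withDensity_exp m μ hv]
    exact withDensity_absolutelyContinuous _ _ |>.ae_le <| llr_withDensity_exp _ (by fun_prop)
  rw [klDiv_eq_integral_of_llr_ae_eq (gaussianReal_absolutelyContinuous_gaussianReal m μ hv) hllr
    hℓ_int, hℓ_affine,
    integral_sub (hid.const_mul _) (integrable_const _), integral_const_mul,
    integral_id_gaussianReal]
  congr 1
  simp only [integral_const, probReal_univ, smul_eq_mul, one_mul]
  field_simp
  ring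

/-- **Tightness of the KL lower bound for Gaussian base measures.** For `P = N(μ, σ²)`
with `σ > 0` and any `ρ ≥ 0`, there is a probability measure `Q ≪ P` with
`KL(Q‖P) = ρ` whose mean is exactly `μ - √(2σ²ρ)`, so the bound
`E_Q[f] ≥ μ - √(2σ² KL(Q‖P))` is attained with equality for the identity score. -/
theorem gaussian_kl_lower_bound_tight (σ μ : ℝ) (hσ : 0 < σ)
    (P : Measure ℝ) (hP : P = ProbabilityTheory.gaussianReal μ (σ ^ 2).toNNReal) :
    ∀ ρ : ℝ, 0 ≤ ρ → ∃ Q : Measure ℝ, IsProbabilityMeasure Q ∧ Q ≪ P ∧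
      klDiv Q P = (ρ : EReal) ∧ ∫ x, x ∂Q = μ - Real.sqrt (2 * σ ^ 2 * ρ) := by
  intro ρ hρ
  have hv : (σ ^ 2).toNNReal ≠ 0 := by simp [hσ.ne']
  have hσ2 : ((σ ^ 2).toNNReal : ℝ) = σ ^ 2 := coe_toNNReal _ (sq_nonneg σ)
  refine ⟨gaussianReal (μ - √(2 * σ ^ 2 * ρ)) (σ ^ 2).toNNReal, inferInstance, ?_, ?_,
    integral_id_gaussianReal⟩
  · exact hP ▸ gaussianReal_absolutelyContinuous_gaussianReal _ μ hv
  · rw [hP, klDiv_gaussianReal_gaussianReal _ _ hv, hσ2, sub_sub_cancel_left, neg_sq,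
      sq_sqrt (by positivity)]
    congr 1
    field_simp
end
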